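/- Let N ≥ 2 and let A be the (N+1)×(N+1) matrix equal to the P_N closure matrix except in the last row, which is (0,…,0, a_{N−1}, a_N). If a_{N−1} > 0, then A is a tridiagonal matrix with positive off-diagonal entries and hence is real diagonalizable. -/

import Mathlib

open Matrix

def RealDiagonalizable {n : ℕ} (A : Matrix (Fin n) (Fin n) ℝ) : Prop :=
  ∃ P D : Matrix (Fin n) (Fin n) ℝ, IsUnit P.det ∧ D.IsDiag ∧ A = P⁻¹ * D * P

/-- The `P_N` closure matrix with its last row replaced by the given row. -/
noncomputable def closureMatrix (N : ℕ) (lastRow : Fin (N + 1) → ℝ) :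
    Matrix (Fin (N + 1)) (Fin (N + 1)) ℝ := fun i j =>
  if (i : ℕ) = N then lastRow j
  else if (j : ℕ) = (i : ℕ) + 1 then (((i : ℕ) : ℝ) + 1) / (2 * ((i : ℕ) : ℝ) + 1)
  else if (i : ℕ) = (j : ℕ) + 1 then ((i : ℕ) : ℝ) / (2 * ((i : ℕ) : ℝ) + 1)
  else 0

/-! A tridiagonal matrix whose adjacent off-diagonal pairs `A i (i+1)`, `A (i+1) i` are positive
is conjugate, by a positive diagonal matrix `diag w`, to a symmetric matrix: choosing
`w (i+1) / w i = √(A i (i+1) / A (i+1) i)` turns both entries into `√(A i (i+1) * A (i+1) i)`.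
The spectral theorem diagonalizes the symmetric matrix over `ℝ`. In the closure matrix these
pairs are `(i+1)/(2i+1)` and `(i+1)/(2i+3)`, except for the last one, whose lower entry is
`a_{N-1}`. -/

namespace RealDiagonalizable

variable {n : ℕ}

theorem of_isHermitian {S : Matrix (Fin n) (Fin n) ℝ} (hS : S.IsHermitian) :
    RealDiagonalizable S := by
  set U : Matrix (Fin n) (Fin n) ℝ := (hS.eigenvectorUnitary : Matrix (Fin n) (Fin n) ℝ)
  have hUU : star U * U = 1 := Matrix.mem_unitaryGroup_iff'.mp hS.eigenvectorUnitary.2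
  refine ⟨star U, diagonal (RCLike.ofReal ∘ hS.eigenvalues),
    isUnit_det_of_right_inverse hUU, isDiag_diagonal _, ?_⟩
  rw [inv_eq_right_inv hUU]
  exact hS.spectral_theorem

theorem of_conj {A S P Q : Matrix (Fin n) (Fin n) ℝ} (hS : RealDiagonalizable S)
    (hPQ : P * Q = 1) (hA : A = P * S * Q) : RealDiagonalizable A := by
  obtain ⟨R, D, hR, hD, rfl⟩ := hS
  refine ⟨R * Q, D, ?_, hD, ?_⟩
  · rw [det_mul]
    exact hR.mul (isUnit_det_of_left_inverse hPQ)
  · rw [hA, Matrix.mul_inv_rev, inv_eq_left_inv hPQ]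
    noncomm_ring

end RealDiagonalizable

section Tridiagonal

variable {n : ℕ} (A : Matrix (Fin (n + 1)) (Fin (n + 1)) ℝ)

noncomputable def symmetrizingWeight : Fin (n + 1) → ℝ :=
  Fin.induction (motive := fun _ => ℝ) 1
    fun k w => w * √(A k.castSucc k.succ / A k.succ k.castSucc)

variable {A}

theorem symmetrizingWeight_succ (k : Fin n) :
    symmetrizingWeight A k.succ =
      symmetrizingWeight A k.castSucc * √(A k.castSucc k.succ / A k.succ k.castSucc) :=
  Fin.induction_succ _ _ k

variable (hpos : ∀ i j : Fin (n + 1), (j : ℕ) = (i : ℕ) + 1 → 0 < A i j ∧ 0 < A j i)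
include hpos

theorem symmetrizingWeight_pos (i : Fin (n + 1)) : 0 < symmetrizingWeight A i := by
  induction i using Fin.induction with
  | zero => exact one_pos
  | succ k ih =>
    obtain ⟨hup, hdown⟩ := hpos k.castSucc k.succ (by simp)
    rw [symmetrizingWeight_succ]
    exact mul_pos ih (Real.sqrt_pos.2 (div_pos hup hdown))

theorem symmetrizingWeight_conj_symm {i j : Fin (n + 1)} (hij : (j : ℕ) = (i : ℕ) + 1) :
    symmetrizingWeight A i * A i j / symmetrizingWeight A j =
      symmetrizingWeight A j * A j i / symmetrizingWeight A i := by
  obtain ⟨k, rfl, rfl⟩ : ∃ k : Fin n, i = k.castSucc ∧ j = k.succ :=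
    ⟨⟨i, by omega⟩, Fin.ext rfl, Fin.ext hij⟩
  obtain ⟨hup, hdown⟩ := hpos k.castSucc k.succ (by simp)
  have hw := (symmetrizingWeight_pos hpos k.castSucc).ne'
  have hsq : √(A k.castSucc k.succ / A k.succ k.castSucc) ^ 2 =
      A k.castSucc k.succ / A k.succ k.castSucc := Real.sq_sqrt (div_pos hup hdown).le
  rw [symmetrizingWeight_succ]
  field_simp
  rw [hsq]
  field_simp

end Tridiagonal

theorem realDiagonalizable_of_tridiagonal {n : ℕ} {A : Matrix (Fin (n + 1)) (Fin (n + 1)) ℝ}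
    (hzero : ∀ i j : Fin (n + 1), ((i : ℕ) + 1 < (j : ℕ) ∨ (j : ℕ) + 1 < (i : ℕ)) → A i j = 0)
    (hpos : ∀ i j : Fin (n + 1), (j : ℕ) = (i : ℕ) + 1 → 0 < A i j ∧ 0 < A j i) :
    RealDiagonalizable A := by
  set w := symmetrizingWeight A
  have hw i : w i ≠ 0 := (symmetrizingWeight_pos hpos i).ne'
  set S : Matrix (Fin (n + 1)) (Fin (n + 1)) ℝ := fun i j => w i * A i j / w j
  have hS : S.IsHermitian := by
    refine IsHermitian.ext fun i j => ?_
    simp only [star_trivial, S]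
    by_cases hfar : (i : ℕ) + 1 < j ∨ (j : ℕ) + 1 < i
    · rw [hzero i j hfar, hzero j i hfar.symm]
      simp
    obtain h | h | h : (j : ℕ) = i + 1 ∨ (i : ℕ) = j + 1 ∨ i = j := by omega
    · exact (symmetrizingWeight_conj_symm hpos h).symm
    · exact symmetrizingWeight_conj_symm hpos h
    · rw [h]
  refine (RealDiagonalizable.of_isHermitian hS).of_conj (P := diagonal w⁻¹) (Q := diagonal w)
    ?_ ?_
  · rw [diagonal_mul_diagonal]
    simp [inv_mul_cancel₀ (hw _)]
  · ext i j
    rw [mul_diagonal, diagonal_mul]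
    simp only [S, Pi.inv_apply]
    field_simp [hw i, hw j]

section ClosureMatrix

variable {N : ℕ} {r : Fin (N + 1) → ℝ}

theorem closureMatrix_eq_zero_of_far (hr : ∀ j : Fin (N + 1), (j : ℕ) + 1 < N → r j = 0)
    {i j : Fin (N + 1)} (hfar : (i : ℕ) + 1 < j ∨ (j : ℕ) + 1 < i) : closureMatrix N r i j = 0 := by
  have := j.isLt
  unfold closureMatrix
  split_ifs <;> first | rfl | omega | exact hr j (by omega)

theorem closureMatrix_adjacent_pos (hr : ∀ j : Fin (N + 1), (j : ℕ) + 1 = N → 0 < r j)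
    {i j : Fin (N + 1)} (hij : (j : ℕ) = i + 1) :
    0 < closureMatrix N r i j ∧ 0 < closureMatrix N r j i := by
  have := j.isLt
  unfold closureMatrix
  constructor
  · rw [if_neg (by omega), if_pos hij]
    positivity
  · by_cases hj : (j : ℕ) = N
    · rw [if_pos hj]
      exact hr i (by omega)
    · rw [if_neg hj, if_neg (by omega), if_pos hij]
      have : (0 : ℝ) < (j : ℕ) := by exact_mod_cast (show 0 < (j : ℕ) by omega)
      positivity

end ClosureMatrix

theorem closure_dof2_hyperbolic_general (N : ℕ) (a1 a0 : ℝ) (ha1 : 0 < a1) :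
    let A := closureMatrix N fun j =>
      if (j : ℕ) = N - 1 then a1 else if (j : ℕ) = N then a0 else 0
    (∀ i j : Fin (N + 1), ((i : ℕ) + 1 < (j : ℕ) ∨ (j : ℕ) + 1 < (i : ℕ)) → A i j = 0) ∧
      (∀ i j : Fin (N + 1), (j : ℕ) = (i : ℕ) + 1 → 0 < A i j ∧ 0 < A j i) ∧
      RealDiagonalizable A := by
  intro A
  have hzero : ∀ i j : Fin (N + 1), ((i : ℕ) + 1 < (j : ℕ) ∨ (j : ℕ) + 1 < (i : ℕ)) →
      A i j = 0 :=
    fun _ _ => closureMatrix_eq_zero_of_far fun j hj => by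
      rw [if_neg (by omega), if_neg (by omega)]
  have hpos : ∀ i j : Fin (N + 1), (j : ℕ) = (i : ℕ) + 1 → 0 < A i j ∧ 0 < A j i :=
    fun _ _ => closureMatrix_adjacent_pos fun j hj => by
      rwa [if_pos (by omega)]
  exact ⟨hzero, hpos, realDiagonalizable_of_tridiagonal hzero hpos⟩

/-- The 2-degree-of-freedom closure matrix, with last row `(0, …, 0, a_{N-1}, a_N)` and
`a_{N-1} > 0`, is tridiagonal with positive off-diagonal entries and real diagonalizable. -/
theorem closure_dof2_hyperbolic (N : ℕ) (hN : 2 ≤ N) (a1 a0 : ℝ) (ha1 : 0 < a1) :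
    let A := closureMatrix N fun j =>
      if (j : ℕ) = N - 1 then a1 else if (j : ℕ) = N then a0 else 0
    (∀ i j : Fin (N + 1), ((i : ℕ) + 1 < (j : ℕ) ∨ (j : ℕ) + 1 < (i : ℕ)) → A i j = 0) ∧
      (∀ i j : Fin (N + 1), (j : ℕ) = (i : ℕ) + 1 → 0 < A i j ∧ 0 < A j i) ∧
      RealDiagonalizable A :=
  closure_dof2_hyperbolic_general N a1 a0 ha1
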